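/- arXiv:2311.17481 — 12 statements merged into one kernel-verified Lean document; each statement's English description precedes it below -/
import Mathlib

section
/- For all positive reals x1, x2, x3 with x1 + x2 + x3 = 1, one has 1/x1 + 1/x2 + 1/x3 ≥ 25 / (1 + 48·x1·x2·x3). -/
/-!
Clearing denominators, the inequality reads `q (1 + 48 p) ≥ 25 p` with `q = x₁x₂ + x₂x₃ + x₃x₁`
and `p = x₁x₂x₃`. Homogenised with `s = x₁ + x₂ + x₃`, the difference `q (s³ + 48 p) - 25 p s²`
is the sum of squares `∑ x₃ (x₁ - x₂)² (3x₃ - x₁ - x₂)²` over the cyclic permutations.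
-/

theorem sym_sum_mul_sub_eq_sum_mul_sq {R : Type*} [CommRing R] (a b c : R) :
    (a * b + b * c + c * a) * ((a + b + c) ^ 3 + 48 * (a * b * c))
        - 25 * (a * b * c) * (a + b + c) ^ 2 =
      c * (a - b) ^ 2 * (3 * c - a - b) ^ 2 + a * (b - c) ^ 2 * (3 * a - b - c) ^ 2
        + b * (c - a) ^ 2 * (3 * b - c - a) ^ 2 := by
  ring

theorem twentyFive_mul_prod_mul_sq_sum_le {a b c : ℝ} (ha : 0 ≤ a) (hb : 0 ≤ b) (hc : 0 ≤ c) :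
    25 * (a * b * c) * (a + b + c) ^ 2 ≤
      (a * b + b * c + c * a) * ((a + b + c) ^ 3 + 48 * (a * b * c)) := by
  have hsos := sym_sum_mul_sub_eq_sum_mul_sq a b c
  have hnonneg : 0 ≤ c * (a - b) ^ 2 * (3 * c - a - b) ^ 2 + a * (b - c) ^ 2 * (3 * a - b - c) ^ 2
      + b * (c - a) ^ 2 * (3 * b - c - a) ^ 2 := by positivity
  linarith

theorem one_div_add_one_div_add_one_div {a b c : ℝ} (ha : a ≠ 0) (hb : b ≠ 0) (hc : c ≠ 0) :
    1 / a + 1 / b + 1 / c = (a * b + b * c + c * a) / (a * b * c) := by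
  field_simp
  ring

theorem stmt_1 (x1 x2 x3 : ℝ) (hx1 : 0 < x1) (hx2 : 0 < x2) (hx3 : 0 < x3)
    (hsum : x1 + x2 + x3 = 1) :
    1 / x1 + 1 / x2 + 1 / x3 ≥ 25 / (1 + 48 * (x1 * x2 * x3)) := by
  have key := twentyFive_mul_prod_mul_sq_sum_le hx1.le hx2.le hx3.le
  rw [hsum, one_pow, one_pow, mul_one] at key
  rw [one_div_add_one_div_add_one_div hx1.ne' hx2.ne' hx3.ne', ge_iff_le,
    div_le_div_iff₀ (by positivity) (by positivity)]
  linarith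
end

section
/- For all real numbers x1, x2, x3 ≥ 0, setting s1 = x1+x2+x3, s2 = x1x2+x2x3+x3x1, s3 = x1x2x3, one has s1^3·s2 + 48·s2·s3 - 25·s1^2·s3 ≥ 0. -/
theorem elementarySymmetric_form_eq_weighted_sum_sq {R : Type*} [CommRing R] (x1 x2 x3 : R) :
    (x1 + x2 + x3) ^ 3 * (x1 * x2 + x2 * x3 + x3 * x1)
      + 48 * (x1 * x2 + x2 * x3 + x3 * x1) * (x1 * x2 * x3)
      - 25 * (x1 + x2 + x3) ^ 2 * (x1 * x2 * x3) =
    x1 * ((x2 - x3) * (x2 + x3 - 3 * x1)) ^ 2 + x2 * ((x3 - x1) * (x3 + x1 - 3 * x2)) ^ 2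
      + x3 * ((x1 - x2) * (x1 + x2 - 3 * x3)) ^ 2 := by
  ring

theorem stmt_3 (x1 x2 x3 : ℝ) (hx1 : 0 ≤ x1) (hx2 : 0 ≤ x2) (hx3 : 0 ≤ x3) :
    (x1 + x2 + x3) ^ 3 * (x1 * x2 + x2 * x3 + x3 * x1)
      + 48 * (x1 * x2 + x2 * x3 + x3 * x1) * (x1 * x2 * x3)
      - 25 * (x1 + x2 + x3) ^ 2 * (x1 * x2 * x3) ≥ 0 := by
  rw [elementarySymmetric_form_eq_weighted_sum_sq, ge_iff_le]
  positivity
end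

section
/- For any triangle with sides a, b, c, circumradius R, and inradius r, one has R/r ≥ 2 + 8·((a-b)^2 + (b-c)^2 + (c-a)^2)/(a+b+c)^2. -/
/-! Substituting `x = s - a`, `y = s - b`, `z = s - c` (positive by the triangle inequalities),
Heron's formula gives `R / r = (x + y) (y + z) (z + x) / (4 x y z)`, and the claim becomes a
symmetric polynomial inequality of degree five in `x, y, z > 0`. It is sharp both at `x = y = z`
and at `(x, y, z) = (2, 1, 1)`; after ordering `z ≤ y ≤ x` it follows from a sum of nonnegative
terms built from `x - y`, `y - z` and `x - y - z`. -/

lemma ravi_poly_ineq_of_le {x y z : ℝ} (hz : 0 < z) (hzy : z ≤ y) (hyx : y ≤ x) :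
    8 * x * y * z * ((x + y + z) ^ 2 + (x - y) ^ 2 + (y - z) ^ 2 + (z - x) ^ 2) ≤
      (x + y) * (y + z) * (z + x) * (x + y + z) ^ 2 := by
  have hu : 0 ≤ x - y := by linarith
  have hv : 0 ≤ y - z := by linarith
  have hz' : 0 ≤ z := hz.le
  nlinarith [mul_nonneg (mul_nonneg (sq_nonneg (x - y)) hz') (sq_nonneg (x - y - z)),
    mul_nonneg (mul_nonneg (mul_nonneg hu hv) (sq_nonneg (x - y - z)))
      (by linarith : (0 : ℝ) ≤ 2 * z + (x - y)),
    mul_nonneg (sq_nonneg (y - z)) (mul_nonneg (mul_nonneg hz' hz') hz'),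
    mul_nonneg (sq_nonneg (y - z)) (mul_nonneg (mul_nonneg hv hz') hz'),
    mul_nonneg (mul_nonneg (sq_nonneg (y - z)) (sq_nonneg (y - z))) hz',
    mul_nonneg (mul_nonneg (sq_nonneg (y - z)) (sq_nonneg (y - z))) hv,
    mul_nonneg (mul_nonneg hu (sq_nonneg (y - z))) (mul_nonneg hz' hz'),
    mul_nonneg (mul_nonneg hu (sq_nonneg (y - z))) (mul_nonneg hv hz'),
    mul_nonneg (mul_nonneg hu (sq_nonneg (y - z))) (sq_nonneg (y - z)),
    mul_nonneg (mul_nonneg (sq_nonneg (x - y)) (sq_nonneg (y - z))) hz',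
    mul_nonneg (mul_nonneg (sq_nonneg (x - y)) (sq_nonneg (y - z))) hv,
    mul_nonneg (mul_nonneg (sq_nonneg (x - y)) (sq_nonneg (y - z))) hu]

lemma ravi_poly_ineq {x y z : ℝ} (hx : 0 < x) (hy : 0 < y) (hz : 0 < z) :
    8 * x * y * z * ((x + y + z) ^ 2 + (x - y) ^ 2 + (y - z) ^ 2 + (z - x) ^ 2) ≤
      (x + y) * (y + z) * (z + x) * (x + y + z) ^ 2 := by
  wlog hyx : y ≤ x generalizing x y
  · linear_combination this hy hx (le_of_not_ge hyx)
  wlog hzy : z ≤ y generalizing x y z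
  · rcases le_total z x with hzx | hxz
    · linear_combination this hy hx hz hzx (le_of_not_ge hzy)
    · linear_combination this hy hz hx hxz hyx
  exact ravi_poly_ineq_of_le hz hzy hyx

lemma circumradius_div_inradius_eq {a b c s K : ℝ} (hs : 0 < s)
    (hK : K = √(s * (s - a) * (s - b) * (s - c))) (hP : 0 < (s - a) * (s - b) * (s - c)) :
    a * b * c / (4 * K) / (K / s) = a * b * c / (4 * ((s - a) * (s - b) * (s - c))) := by
  have hprod : 0 < s * (s - a) * (s - b) * (s - c) := by
    simpa only [mul_assoc] using mul_pos hs hP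
  have hK_pos : 0 < K := hK ▸ Real.sqrt_pos.mpr hprod
  have hK_sq : K ^ 2 = s * ((s - a) * (s - b) * (s - c)) := by
    rw [hK, Real.sq_sqrt hprod.le]; ring
  calc a * b * c / (4 * K) / (K / s) = a * b * c * s / (4 * K ^ 2) := by field_simp
    _ = _ := by rw [hK_sq]; field_simp

theorem stmt_5_general (a b c s K R r : ℝ)
    (hab : a < b + c) (hbc : b < a + c) (hca : c < a + b)
    (hs : s = (a + b + c) / 2)
    (hK : K = Real.sqrt (s * (s - a) * (s - b) * (s - c)))
    (hR : R = a * b * c / (4 * K))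
    (hr : r = K / s) :
    R / r ≥ 2 + 8 * ((a - b) ^ 2 + (b - c) ^ 2 + (c - a) ^ 2) / (a + b + c) ^ 2 := by
  have hx : 0 < s - a := by linarith
  have hy : 0 < s - b := by linarith
  have hz : 0 < s - c := by linarith
  rw [hR, hr, circumradius_div_inradius_eq (by linarith) hK (by positivity)]
  have key := ravi_poly_ineq hx hy hz
  have hxyz : 0 < 4 * ((s - a) * (s - b) * (s - c)) := by positivity
  have hp : 0 < a + b + c := by linarith
  subst hs
  rw [ge_iff_le, add_div' _ _ _ (by positivity), div_le_div_iff₀ (by positivity) hxyz]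
  linear_combination 4 * key

theorem stmt_5 (a b c s K R r : ℝ)
    (ha : 0 < a) (hb : 0 < b) (hc : 0 < c)
    (hab : a < b + c) (hbc : b < a + c) (hca : c < a + b)
    (hs : s = (a + b + c) / 2)
    (hK : K = Real.sqrt (s * (s - a) * (s - b) * (s - c)))
    (hR : R = a * b * c / (4 * K))
    (hr : r = K / s) :
    R / r ≥ 2 + 8 * ((a - b) ^ 2 + (b - c) ^ 2 + (c - a) ^ 2) / (a + b + c) ^ 2 :=
  stmt_5_general a b c s K R r hab hbc hca hs hK hR hr
end

section
/- For any triangle with sides a, b, c: a^3/(b+c-a) + b^3/(a+c-b) + c^3/(a+b-c) + 7(ab+bc+ca) ≥ 8(a^2+b^2+c^2). -/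
/-!
Clearing the denominators turns the inequality into a polynomial one, and that polynomial is,
up to the factor `1/2`, the sum of squares
`Σ (a + b - c) (a - b)² (3a + 3b - 5c)²`, whose weights are positive for a triangle.
-/

theorem sum_cube_div_add_sub_eq (a b c : ℝ) (hu : b + c - a ≠ 0) (hv : a + c - b ≠ 0)
    (hw : a + b - c ≠ 0) :
    a ^ 3 / (b + c - a) + b ^ 3 / (a + c - b) + c ^ 3 / (a + b - c)
        + 7 * (a * b + b * c + c * a) - 8 * (a ^ 2 + b ^ 2 + c ^ 2)
      = ((a + b - c) * (a - b) ^ 2 * (3 * a + 3 * b - 5 * c) ^ 2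
          + (b + c - a) * (b - c) ^ 2 * (3 * b + 3 * c - 5 * a) ^ 2
          + (a + c - b) * (c - a) ^ 2 * (3 * c + 3 * a - 5 * b) ^ 2)
        / (2 * ((b + c - a) * (a + c - b) * (a + b - c))) := by
  field_simp
  ring

theorem stmt_6_general (a b c : ℝ)
    (hab : a < b + c) (hbc : b < a + c) (hca : c < a + b) :
    a ^ 3 / (b + c - a) + b ^ 3 / (a + c - b) + c ^ 3 / (a + b - c)
      + 7 * (a * b + b * c + c * a) ≥ 8 * (a ^ 2 + b ^ 2 + c ^ 2) := by
  have hu : 0 < b + c - a := by linarith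
  have hv : 0 < a + c - b := by linarith
  have hw : 0 < a + b - c := by linarith
  rw [ge_iff_le, ← sub_nonneg, sum_cube_div_add_sub_eq a b c hu.ne' hv.ne' hw.ne']
  have hsos : 0 ≤ (a + b - c) * (a - b) ^ 2 * (3 * a + 3 * b - 5 * c) ^ 2
      + (b + c - a) * (b - c) ^ 2 * (3 * b + 3 * c - 5 * a) ^ 2
      + (a + c - b) * (c - a) ^ 2 * (3 * c + 3 * a - 5 * b) ^ 2 := by
    positivity
  exact div_nonneg hsos (by positivity)

theorem stmt_6 (a b c : ℝ) (ha : 0 < a) (hb : 0 < b) (hc : 0 < c)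
    (hab : a < b + c) (hbc : b < a + c) (hca : c < a + b) :
    a ^ 3 / (b + c - a) + b ^ 3 / (a + c - b) + c ^ 3 / (a + b - c)
      + 7 * (a * b + b * c + c * a) ≥ 8 * (a ^ 2 + b ^ 2 + c ^ 2) :=
  stmt_6_general a b c hab hbc hca
end

section
/- If λ > (582√97 - 2054)/121 then the choice x1 = x2 = x3 = (5+√97)/72, x4 = (19-√97)/24 (positive reals summing to 1) satisfies 1/x1 + 1/x2 + 1/x3 + 1/x4 < λ / (1 + 16(λ-16)x1x2x3x4). -/
/-!
With `s = √97`, the point `x = (5 + s)/72` is a root of `72x² - 10x - 1`, so `1/x = s - 5`,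
`1/x₄ = (19 + s)/11`, and `x³x₄ = (211s + 1667)/1119744`, all in `ℚ(√97)`.
The inequality `L < λ / (1 + 16(λ - 16)P)` is affine in `λ` once the denominator is cleared,
and `(582√97 - 2054)/121` is exactly its root `L(1 - 256P)/(1 - 16LP)`.
-/

theorem lt_div_of_threshold_lt {L P lam₀ lam : ℝ} (hP : 0 ≤ P) (hc : 0 < 1 - 16 * L * P)
    (hthr : L * (1 - 256 * P) = lam₀ * (1 - 16 * L * P)) (h16 : 16 ≤ lam) (hlam : lam₀ < lam) :
    L < lam / (1 + 16 * (lam - 16) * P) := by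
  have hD : 0 < 1 + 16 * (lam - 16) * P := by
    have : 0 ≤ (lam - 16) * P := mul_nonneg (by linarith) hP
    linarith
  rw [lt_div_iff₀ hD]
  linear_combination hthr + (1 - 16 * L * P) * hlam

theorem one_div_five_add_div_72 {s : ℝ} (hs : s ^ 2 = 97) : 1 / ((5 + s) / 72) = s - 5 := by
  have : 5 + s ≠ 0 := fun h => by nlinarith [eq_neg_of_add_eq_zero_right h]
  field_simp
  linear_combination -hs

theorem one_div_nineteen_sub_div_24 {s : ℝ} (hs : s ^ 2 = 97) :
    1 / ((19 - s) / 24) = (19 + s) / 11 := by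
  have : 19 - s ≠ 0 := fun h => by nlinarith [sub_eq_zero.mp h]
  rw [div_eq_div_iff (div_ne_zero this (by norm_num)) (by norm_num)]
  linear_combination (1 / 24) * hs

theorem five_add_div_72_cube_mul {s : ℝ} (hs : s ^ 2 = 97) :
    (5 + s) / 72 * ((5 + s) / 72) * ((5 + s) / 72) * ((19 - s) / 24)
      = (211 * s + 1667) / 1119744 := by
  linear_combination ((-s ^ 2 + 4 * s + 113) / 8957952) * hs

theorem threshold_denom_eq {s : ℝ} (hs : s ^ 2 = 97) :
    1 - 16 * (s - 5 + (s - 5) + (s - 5) + (19 + s) / 11) * ((211 * s + 1667) / 1119744)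
      = (601 - 49 * s) / 1458 := by
  linear_combination (-3587 / 384912) * hs

theorem threshold_eq {s : ℝ} (hs : s ^ 2 = 97) :
    let L := s - 5 + (s - 5) + (s - 5) + (19 + s) / 11
    let P := (211 * s + 1667) / 1119744
    L * (1 - 256 * P) = (582 * s - 2054) / 121 * (1 - 16 * L * P) := by
  intro L P
  linear_combination ((347939 * s - 1130563) / 7762392) * hs

theorem sqrt_97_mem_Ioo : Real.sqrt 97 ∈ Set.Ioo 9 10 := by
  constructor
  · rw [Real.lt_sqrt (by norm_num)]; norm_num
  · rw [Real.sqrt_lt' (by norm_num)]; norm_num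

theorem stmt_9 (lam : ℝ) (hlam : (582 * Real.sqrt 97 - 2054) / 121 < lam)
    (x1 x2 x3 x4 : ℝ)
    (h1 : x1 = (5 + Real.sqrt 97) / 72) (h2 : x2 = (5 + Real.sqrt 97) / 72)
    (h3 : x3 = (5 + Real.sqrt 97) / 72) (h4 : x4 = (19 - Real.sqrt 97) / 24) :
    0 < x1 ∧ 0 < x2 ∧ 0 < x3 ∧ 0 < x4 ∧ x1 + x2 + x3 + x4 = 1 ∧
      1 / x1 + 1 / x2 + 1 / x3 + 1 / x4 <
        lam / (1 + 16 * (lam - 16) * (x1 * x2 * x3 * x4)) := by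
  subst h1 h2 h3 h4
  have hs : Real.sqrt 97 ^ 2 = 97 := Real.sq_sqrt (by norm_num)
  obtain ⟨hs9, hs10⟩ := sqrt_97_mem_Ioo
  have hx : 0 < (5 + Real.sqrt 97) / 72 := by positivity
  refine ⟨hx, hx, hx, by linarith, by ring, ?_⟩
  rw [one_div_five_add_div_72 hs, one_div_nineteen_sub_div_24 hs,
    five_add_div_72_cube_mul hs]
  refine lt_div_of_threshold_lt (by positivity) ?_ (threshold_eq hs) (by linarith) hlam
  rw [threshold_denom_eq hs]
  linarith
end

section
/- For arbitrary positive reals x1, …, xn (n ≥ 2), one has A^{n-1}·H ≥ G^n, where A = (Σ x_i)/n is the arithmetic mean, H = n/(Σ 1/x_i) the harmonic mean, and G = (Π x_i)^{1/n} the geometric mean. -/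
/-!
With `S = ∑ xᵢ`, `P = ∏ xᵢ` and `T = ∑ 1/xᵢ`, the inequality says `P * T ≤ n * (S / n) ^ (n - 1)`,
the case `k = n - 1` of Maclaurin's inequality for `e_{n-1} = P * T`. It is proved by induction on
`n`, splitting off the last variable `t`: `P' * t * (T' + 1/t) = t * (P' * T') + P'`, where the
induction hypothesis bounds `P' * T'`, AM-GM bounds `P'` by a power of the old mean `u`, and the
tangent line of `a ↦ a ^ (m + 1)` at `u`, evaluated at the new mean, closes the step.
-/

open Finset

theorem Real.prod_le_arith_mean_pow {ι : Type*} (s : Finset ι) (f : ι → ℝ)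
    (hf : ∀ i ∈ s, 0 ≤ f i) : ∏ i ∈ s, f i ≤ ((∑ i ∈ s, f i) / #s) ^ #s := by
  rcases s.eq_empty_or_nonempty with rfl | hs
  · simp
  have amgm := Real.geom_mean_le_arith_mean_weighted s (fun _ ↦ (#s : ℝ)⁻¹) f
    (fun _ _ ↦ by positivity) (by simp [hs.card_pos.ne']) hf
  rw [Real.finsetProd_rpow s f hf, ← mul_sum, inv_mul_eq_div] at amgm
  calc ∏ i ∈ s, f i = ((∏ i ∈ s, f i) ^ (#s : ℝ)⁻¹) ^ #s :=
        (Real.rpow_inv_natCast_pow (prod_nonneg hf) hs.card_pos.ne').symm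
    _ ≤ ((∑ i ∈ s, f i) / #s) ^ #s := by gcongr; exact Real.rpow_nonneg (prod_nonneg hf) _

theorem pow_mul_succ_mul_sub_le_pow_succ {R : Type*} [CommRing R] [LinearOrder R]
    [IsStrictOrderedRing R] {u a : R} (hu : 0 ≤ u) (hua : 0 ≤ u + a) (m : ℕ) :
    u ^ m * ((m + 1) * a - m * u) ≤ a ^ (m + 1) := by
  have bernoulli := pow_add_mul_le_add_pow hu (b := a - u) (by linear_combination hua) (m + 1)
  simp only [add_sub_cancel, Nat.add_sub_cancel, Nat.cast_succ] at bernoulli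
  linear_combination bernoulli

theorem prod_mul_sum_inv_le (m : ℕ) (x : Fin (m + 1) → ℝ) (hx : ∀ i, 0 < x i) :
    (∏ i, x i) * ∑ i, (x i)⁻¹ ≤ (m + 1) * ((∑ i, x i) / (m + 1)) ^ m := by
  induction m with
  | zero => simp [(hx 0).ne']
  | succ m ih =>
    have hIH := ih (fun i : Fin (m + 1) ↦ x i.castSucc) fun i ↦ hx _
    have hAMGM := Real.prod_le_arith_mean_pow univ (fun i : Fin (m + 1) ↦ x i.castSucc)
      fun i _ ↦ (hx _).le
    have hS : 0 < ∑ i : Fin (m + 1), x i.castSucc := sum_pos (fun i _ ↦ hx _) univ_nonempty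
    have ht := hx (Fin.last (m + 1))
    rw [Fin.prod_univ_castSucc (f := x), Fin.sum_univ_castSucc (f := fun i ↦ (x i)⁻¹),
      Fin.sum_univ_castSucc (f := x)]
    simp only [card_univ, Fintype.card_fin, Nat.cast_add, Nat.cast_one] at hAMGM ⊢
    generalize ∑ i : Fin (m + 1), x i.castSucc = S at *
    generalize ∏ i : Fin (m + 1), x i.castSucc = P at *
    generalize ∑ i : Fin (m + 1), (x i.castSucc)⁻¹ = T at *
    generalize x (Fin.last (m + 1)) = t at *
    obtain ⟨u, hu, rfl⟩ : ∃ u, 0 < u ∧ S = (m + 1) * u :=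
      ⟨S / (m + 1), by positivity, by field_simp⟩
    have hm : (m : ℝ) + 1 ≠ 0 := by positivity
    simp only [mul_div_cancel_left₀ _ hm] at hIH hAMGM ⊢
    have htangent := pow_mul_succ_mul_sub_le_pow_succ hu.le
      (a := ((m + 1) * u + t) / (m + 1 + 1)) (by positivity) m
    calc P * t * (T + t⁻¹) = t * (P * T) + P := by field_simp
      _ ≤ t * ((m + 1) * u ^ m) + u ^ (m + 1) := by gcongr
      _ = (m + 1 + 1) * (u ^ m * ((m + 1) * (((m + 1) * u + t) / (m + 1 + 1)) - m * u)) := by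
          field_simp; ring
      _ ≤ (m + 1 + 1) * (((m + 1) * u + t) / (m + 1 + 1)) ^ (m + 1) := by gcongr

theorem stmt_11 (n : ℕ) (hn : 2 ≤ n) (x : Fin n → ℝ) (hx : ∀ i, 0 < x i) :
    ((∑ i, x i) / n) ^ (n - 1) * ((n : ℝ) / ∑ i, 1 / x i)
      ≥ ((∏ i, x i) ^ ((1 : ℝ) / n)) ^ n := by
  obtain ⟨m, rfl⟩ : ∃ m, n = m + 1 := ⟨n - 1, by omega⟩
  have hT : 0 < ∑ i, 1 / x i := sum_pos (fun i _ ↦ one_div_pos.2 (hx i)) univ_nonempty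
  rw [ge_iff_le, one_div, Real.rpow_inv_natCast_pow (prod_nonneg fun i _ ↦ (hx i).le)
      m.succ_ne_zero, Nat.add_sub_cancel, mul_div_assoc', le_div_iff₀ hT,
    mul_comm _ ((m + 1 : ℕ) : ℝ)]
  simpa only [one_div, Nat.cast_add, Nat.cast_one] using prod_mul_sum_inv_le m x hx
end

section
/- For every real l < n-1 (with n ≥ 2), the inequality A^l·H ≥ G^{l+1} fails for some positive reals x1,…,xn: taking x1 = ⋯ = x_{n-1} = 1 and xn = x, the ratio A^l·H / G^{l+1} tends to 0 as x → 0+. -/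
/-! With `x₁ = ⋯ = xₙ₋₁ = 1` and `xₙ = x`, the ratio `A^l H / G^(l+1)` equals a factor that is
continuous and positive at `x = 0` times `x ^ (1 - (l+1)/n)`, and this exponent is positive
exactly when `l < n - 1`. -/

open Filter Topology

namespace MeanRatio

variable {a m l : ℝ}

lemma eq_mul_rpow {x : ℝ} (hx : 0 < x) :
    ((a + x) / m) ^ l * (m / (a + 1 / x)) / (x ^ (1 / m)) ^ (l + 1)
      = ((a + x) / m) ^ l * (m / (a * x + 1)) * x ^ (1 - (l + 1) / m) := by
  have hden : a + 1 / x = (a * x + 1) / x := by field_simp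
  rw [← Real.rpow_mul hx.le, Real.rpow_sub hx, Real.rpow_one, hden, one_div_mul_eq_div]
  field_simp

lemma continuousAt_mul_rpow (ha : 0 < a) (hm : m ≠ 0) {p : ℝ} (hp : 0 < p) :
    ContinuousAt (fun x : ℝ => ((a + x) / m) ^ l * (m / (a * x + 1)) * x ^ p) 0 := by
  have hbase : (a + 0) / m ≠ 0 := by simp [ha.ne', hm]
  refine (((continuousAt_const.add continuousAt_id).div_const m).rpow_const (.inl hbase)).mul
    (continuousAt_const.div (by fun_prop) (by simp)) |>.mul ?_
  exact Real.continuousAt_rpow_const 0 p (.inr hp.le)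

theorem tendsto_nhdsGT_zero (ha : 0 < a) (hm : 0 < m) (hl : l + 1 < m) :
    Tendsto (fun x : ℝ => ((a + x) / m) ^ l * (m / (a + 1 / x)) / (x ^ (1 / m)) ^ (l + 1))
      (𝓝[>] 0) (𝓝 0) := by
  have hp : 0 < 1 - (l + 1) / m := by rwa [sub_pos, div_lt_one hm]
  have hlim := (continuousAt_mul_rpow (l := l) ha hm.ne' hp).tendsto
  rw [Real.zero_rpow hp.ne', mul_zero] at hlim
  exact (hlim.mono_left nhdsWithin_le_nhds).congr' (eventually_nhdsWithin_of_forall fun x hx => (eq_mul_rpow hx).symm)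

end MeanRatio

theorem stmt_12 (n : ℕ) (hn : 2 ≤ n) (l : ℝ) (hl : l < (n : ℝ) - 1) :
    Filter.Tendsto
      (fun x : ℝ =>
        ((((n : ℝ) - 1) + x) / n) ^ l * ((n : ℝ) / (((n : ℝ) - 1) + 1 / x)) /
          (x ^ ((1 : ℝ) / n)) ^ (l + 1))
      (nhdsWithin 0 (Set.Ioi 0)) (nhds 0) := by
  have hn' : (2 : ℝ) ≤ n := by exact_mod_cast hn
  exact MeanRatio.tendsto_nhdsGT_zero (by linarith) (by linarith) (by linarith)
end

section
/- For every natural number n ≥ 3 and real 0 < x ≤ 1/n, with x1 = x and x2 = ⋯ = xn = (1-x)/(n-1), one has 1/x + (n-1)^2/(1-x) ≤ (n-1)^{n-1} / (n^{n-2}·x·(1-x)^{n-1}), with equality iff x = 1/n. -/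
/-!
Write `n = k + 3`, `a = n (1 - x)` and `b = n - 1`. Over the common denominator
`n ^ (n - 2) x (1 - x) ^ (n - 1)`, the right-hand side minus the left-hand side has numerator
`b ^ (k + 2) - ((k + 2) b - (k + 1) a) a ^ (k + 1)`, the gap in the tangent-line (Bernoulli)
inequality for `t ↦ t ^ (k + 2)` at `b`. That gap is at least `(a - b) ^ 2 b ^ k`, so it is
nonnegative and vanishes exactly when `a = b`, i.e. when `x = 1 / n`.
-/

section TangentLine

variable {R : Type*} [CommRing R] [LinearOrder R] [IsStrictOrderedRing R]

theorem sq_sub_mul_pow_le_pow_sub_mul_pow (k : ℕ) {a b : R} (ha : 0 ≤ a) (hb : 0 ≤ b) :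
    (a - b) ^ 2 * b ^ k ≤ b ^ (k + 2) - ((k + 2) * b - (k + 1) * a) * a ^ (k + 1) := by
  induction k with
  | zero => exact le_of_eq (by ring)
  | succ k ih =>
    have hstep : b ^ (k + 3) - ((k + 3) * b - (k + 2) * a) * a ^ (k + 2) =
        b * (b ^ (k + 2) - ((k + 2) * b - (k + 1) * a) * a ^ (k + 1)) +
          (k + 2) * a ^ (k + 1) * (a - b) ^ 2 := by ring
    push_cast
    calc (a - b) ^ 2 * b ^ (k + 1) = b * ((a - b) ^ 2 * b ^ k) := by ring
      _ ≤ b * (b ^ (k + 2) - ((k + 2) * b - (k + 1) * a) * a ^ (k + 1)) :=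
        mul_le_mul_of_nonneg_left ih hb
      _ ≤ _ := by
        rw [show (k : R) + 1 + 2 = k + 3 by ring, show (k : R) + 1 + 1 = k + 2 by ring, hstep]
        have : 0 ≤ (k + 2) * a ^ (k + 1) * (a - b) ^ 2 := by positivity
        linarith

theorem pow_sub_mul_pow_eq_zero_iff (k : ℕ) {a b : R} (ha : 0 ≤ a) (hb : 0 < b) :
    b ^ (k + 2) - ((k + 2) * b - (k + 1) * a) * a ^ (k + 1) = 0 ↔ a = b := by
  constructor
  · intro h
    have hle := sq_sub_mul_pow_le_pow_sub_mul_pow k ha hb.le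
    rw [h] at hle
    have : (a - b) ^ 2 = 0 :=
      le_antisymm (nonpos_of_mul_nonpos_left hle (pow_pos hb k)) (sq_nonneg _)
    exact sub_eq_zero.mp (pow_eq_zero_iff two_ne_zero |>.mp this)
  · rintro rfl
    ring

end TangentLine

theorem pow_div_sub_inv_add_div_eq (k : ℕ) {x : ℝ} (hx : x ≠ 0) (hx1 : 1 - x ≠ 0) :
    ((k : ℝ) + 2) ^ (k + 2) / (((k : ℝ) + 3) ^ (k + 1) * x * (1 - x) ^ (k + 2)) -
        (1 / x + ((k : ℝ) + 2) ^ 2 / (1 - x)) =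
      (((k : ℝ) + 2) ^ (k + 2) - ((k + 2) * (k + 2) - (k + 1) * ((k + 3) * (1 - x))) *
          ((k + 3) * (1 - x)) ^ (k + 1)) /
        (((k : ℝ) + 3) ^ (k + 1) * x * (1 - x) ^ (k + 2)) := by
  have hk : ((k : ℝ) + 3) ≠ 0 := by positivity
  rw [eq_div_iff (by positivity), sub_mul, div_mul_cancel₀ _ (by positivity), mul_pow]
  field_simp
  ring

theorem stmt_13 (n : ℕ) (hn : 3 ≤ n) (x : ℝ) (hx : 0 < x) (hx1 : x ≤ 1 / n) :
    1 / x + ((n : ℝ) - 1) ^ 2 / (1 - x) ≤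
        ((n : ℝ) - 1) ^ (n - 1) / ((n : ℝ) ^ (n - 2) * x * (1 - x) ^ (n - 1)) ∧
      (1 / x + ((n : ℝ) - 1) ^ 2 / (1 - x) =
          ((n : ℝ) - 1) ^ (n - 1) / ((n : ℝ) ^ (n - 2) * x * (1 - x) ^ (n - 1)) ↔
        x = 1 / n) := by
  obtain ⟨k, rfl⟩ := Nat.exists_eq_add_of_le' hn
  rw [show k + 3 - 1 = k + 2 by omega, show k + 3 - 2 = k + 1 by omega]
  push_cast at hx1 ⊢
  rw [show (k : ℝ) + 3 - 1 = k + 2 by ring]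
  have hxn : x * (k + 3) ≤ 1 := (le_div_iff₀ (by positivity)).mp hx1
  have h1x : 0 < 1 - x := by nlinarith
  have ha : 0 ≤ ((k : ℝ) + 3) * (1 - x) := by positivity
  have hb : 0 < (k : ℝ) + 2 := by positivity
  have hden : 0 < ((k : ℝ) + 3) ^ (k + 1) * x * (1 - x) ^ (k + 2) := by positivity
  have hgap := pow_div_sub_inv_add_div_eq k hx.ne' h1x.ne'
  have hnum := (by positivity : 0 ≤ ((k + 3) * (1 - x) - (k + 2)) ^ 2 * ((k : ℝ) + 2) ^ k).trans
    (sq_sub_mul_pow_le_pow_sub_mul_pow k ha hb.le)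
  refine ⟨sub_nonneg.mp (hgap ▸ div_nonneg hnum hden.le), ?_⟩
  rw [eq_comm, ← sub_eq_zero, hgap, div_eq_zero_iff, or_iff_left hden.ne',
    pow_sub_mul_pow_eq_zero_iff k ha hb, eq_div_iff (by positivity)]
  constructor <;> intro h <;> linarith
end

section
/- Let n ≥ 3 and define p_n(t) = ((n-1) - (n-2)t)·Σ_{k=1}^{n-1} k·t^{k-1}. Then its derivative p_n'(t) has exactly one zero in the interval (0,1); moreover p_n'(0) = n > 0 and p_n'(1) = -n(n-1)(n-2)/6 < 0. -/
/-!
Expanding the product, `p_n(t) = ∑_{k<n-1} (n-1+k) t^k - (n-2)(n-1) t^(n-1)`, so every coefficient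
of `p_n'` is positive except the leading one. Hence `p_n'(t) / t^(n-2)` is a sum of positive
multiples of negative powers of `t` minus a constant, strictly decreasing on `(0, ∞)`, and `p_n'`
has at most one positive root; the intermediate value theorem between `p_n'(0) > 0` and
`p_n'(1) < 0` provides one in `(0, 1)`.
-/

open Finset

section PositiveRoot

variable {N : ℕ} (a : ℕ → ℝ) (c : ℝ)

lemma sum_mul_pow_sub_mul_pow_eq {t : ℝ} (ht : t ≠ 0) :
    ∑ k ∈ range N, a k * t ^ k - c * t ^ N
      = t ^ N * (∑ k ∈ range N, a k * t⁻¹ ^ (N - k) - c) := by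
  rw [mul_sub, mul_sum, mul_comm c]
  congr 1
  refine sum_congr rfl fun k hk => ?_
  rw [← pow_mul_pow_sub t (mem_range.mp hk).le, inv_pow]
  field_simp

lemma strictAntiOn_sum_mul_inv_pow (hN : 0 < N) (ha : ∀ k < N, 0 < a k) :
    StrictAntiOn (fun t : ℝ => ∑ k ∈ range N, a k * t⁻¹ ^ (N - k)) (Set.Ioi 0) := by
  intro s hs t ht hst
  refine sum_lt_sum_of_nonempty (nonempty_range_iff.mpr hN.ne') fun k hk => ?_
  have hk := mem_range.mp hk
  have hinv : t⁻¹ < s⁻¹ := (inv_lt_inv₀ ht hs).mpr hst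
  exact mul_lt_mul_of_pos_left
    (pow_lt_pow_left₀ hinv (inv_pos.mpr ht).le (by omega)) (ha k hk)

/-- Descartes' rule of signs in its simplest case: one sign change. -/
lemma subsingleton_pos_root_sum_mul_pow_sub_mul_pow (hN : 0 < N) (ha : ∀ k < N, 0 < a k) :
    {t : ℝ | 0 < t ∧ ∑ k ∈ range N, a k * t ^ k - c * t ^ N = 0}.Subsingleton := by
  rintro s ⟨hs, hs0⟩ t ⟨ht, ht0⟩
  rw [sum_mul_pow_sub_mul_pow_eq a c hs.ne', mul_eq_zero, sub_eq_zero] at hs0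
  rw [sum_mul_pow_sub_mul_pow_eq a c ht.ne', mul_eq_zero, sub_eq_zero] at ht0
  refine (strictAntiOn_sum_mul_inv_pow a hN ha).injOn hs ht ?_
  rw [hs0.resolve_left (pow_ne_zero _ hs.ne'), ht0.resolve_left (pow_ne_zero _ ht.ne')]

theorem existsUnique_mem_Ioo_sum_mul_pow_sub_mul_pow_eq_zero
    (hN : 0 < N) (ha : ∀ k < N, 0 < a k) (hc : ∑ k ∈ range N, a k < c) :
    ∃! t : ℝ, t ∈ Set.Ioo 0 1 ∧ ∑ k ∈ range N, a k * t ^ k - c * t ^ N = 0 := by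
  set f : ℝ → ℝ := fun t => ∑ k ∈ range N, a k * t ^ k - c * t ^ N
  have hf0 : f 0 = a 0 := by
    obtain ⟨M, rfl⟩ := Nat.exists_eq_add_of_lt hN
    simp [f, sum_range_succ']
  have hf1 : f 1 < 0 := by simpa [f] using hc
  have hcont : ContinuousOn f (Set.Icc 0 1) := by fun_prop
  obtain ⟨t, ht, hft⟩ :=
    intermediate_value_Ioo' zero_le_one hcont ⟨hf1, hf0 ▸ ha 0 hN⟩
  refine ⟨t, ⟨ht, hft⟩, fun s hs => ?_⟩
  exact subsingleton_pos_root_sum_mul_pow_sub_mul_pow a c hN ha ⟨hs.1.1, hs.2⟩ ⟨ht.1, hft⟩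

end PositiveRoot

lemma sub_mul_mul_sum_range_add_one_mul_pow {R : Type*} [CommRing R] (A B t : R) (M : ℕ) :
    (A - B * t) * ∑ k ∈ range M, ((k : R) + 1) * t ^ k
      = ∑ k ∈ range M, (A * (k + 1) - B * k) * t ^ k - B * M * t ^ M := by
  induction M with
  | zero => simp
  | succ M ih =>
    rw [sum_range_succ, mul_add, ih, sum_range_succ]
    push_cast
    ring

lemma hasDerivAt_sum_range_succ_mul_pow (b : ℕ → ℝ) (M : ℕ) (t : ℝ) :
    HasDerivAt (fun t => ∑ k ∈ range (M + 1), b k * t ^ k)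
      (∑ k ∈ range M, ((k : ℝ) + 1) * b (k + 1) * t ^ k) t := by
  have h := HasDerivAt.fun_sum fun k (_ : k ∈ range (M + 1)) =>
    (hasDerivAt_pow k t).const_mul (b k)
  rw [sum_range_succ'] at h
  refine h.congr_deriv ?_
  simp only [Nat.cast_zero, zero_mul, mul_zero, add_zero, Nat.cast_add, Nat.cast_one,
    add_tsub_cancel_right]
  exact sum_congr rfl fun k _ => by ring

lemma sum_range_add_one_mul_add (A : ℝ) (M : ℕ) :
    ∑ k ∈ range M, ((k : ℝ) + 1) * (A + k) = M * (M + 1) * (3 * A + 2 * M - 2) / 6 := by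
  induction M with
  | zero => simp
  | succ M ih => rw [sum_range_succ, ih]; push_cast; ring

lemma hasDerivAt_sub_mul_mul_sum_range_add_one_mul_pow (n : ℕ) (hn : 2 ≤ n) (t : ℝ) :
    HasDerivAt (fun t : ℝ => (((n : ℝ) - 1) - ((n : ℝ) - 2) * t) *
        ∑ k ∈ range (n - 1), ((k : ℝ) + 1) * t ^ k)
      (∑ k ∈ range (n - 2), ((k : ℝ) + 1) * (n + k) * t ^ k
        - ((n : ℝ) - 2) * ((n : ℝ) - 1) ^ 2 * t ^ (n - 2)) t := by
  obtain ⟨N, rfl⟩ := Nat.exists_eq_add_of_le' hn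
  simp only [sub_mul_mul_sum_range_add_one_mul_pow, Nat.add_sub_cancel,
    show N + 2 - 1 = N + 1 by omega]
  refine ((hasDerivAt_sum_range_succ_mul_pow _ N t).sub
    ((hasDerivAt_pow (N + 1) t).const_mul _)).congr_deriv ?_
  push_cast
  congr 1
  · exact sum_congr rfl fun k _ => by ring
  · simp only [add_tsub_cancel_right]; ring

theorem stmt_15 (n : ℕ) (hn : 3 ≤ n)
    (p : ℝ → ℝ)
    (hp : p = fun t => (((n : ℝ) - 1) - ((n : ℝ) - 2) * t) *
      ∑ k ∈ Finset.range (n - 1), ((k : ℝ) + 1) * t ^ k) :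
    (∃! t : ℝ, t ∈ Set.Ioo (0 : ℝ) 1 ∧ deriv p t = 0) ∧
      deriv p 0 = n ∧ (0 : ℝ) < n ∧
      deriv p 1 = -((n : ℝ) * ((n : ℝ) - 1) * ((n : ℝ) - 2)) / 6 ∧
      -((n : ℝ) * ((n : ℝ) - 1) * ((n : ℝ) - 2)) / 6 < 0 := by
  have hderiv : ∀ t, deriv p t = ∑ k ∈ range (n - 2), ((k : ℝ) + 1) * (n + k) * t ^ k
      - ((n : ℝ) - 2) * ((n : ℝ) - 1) ^ 2 * t ^ (n - 2) := fun t =>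
    hp ▸ (hasDerivAt_sub_mul_mul_sum_range_add_one_mul_pow n (by omega) t).deriv
  have hn' : (3 : ℝ) ≤ n := by exact_mod_cast hn
  have hcast : ((n - 2 : ℕ) : ℝ) = n - 2 := by
    rw [Nat.cast_sub (by omega), Nat.cast_ofNat]
  have h1 : deriv p 1 = -((n : ℝ) * ((n : ℝ) - 1) * ((n : ℝ) - 2)) / 6 := by
    simp only [hderiv, one_pow, mul_one, sum_range_add_one_mul_add, hcast]
    ring
  refine ⟨?_, ?_, by positivity, h1, ?_⟩
  · simp only [hderiv]
    refine existsUnique_mem_Ioo_sum_mul_pow_sub_mul_pow_eq_zero _ _ (by omega)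
      (fun k _ => by positivity) ?_
    rw [sum_range_add_one_mul_add, hcast]
    nlinarith
  · obtain ⟨M, hM⟩ : ∃ M, n - 2 = M + 1 := ⟨n - 3, by omega⟩
    simp [hderiv, hM, sum_range_succ']
  · have : 0 < (n : ℝ) * ((n : ℝ) - 1) * ((n : ℝ) - 2) := by
      apply mul_pos (mul_pos _ _) _ <;> linarith
    linarith
end

section
/- For every natural n ≥ 3 and all positive reals x1, …, xn with Σ x_i = 1, the inequality Σ 1/x_i ≥ λ / (1 + n^{n-2}(λ - n^2)·Π x_i) holds with λ = n^3/(n-1). -/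
/-!
Writing `λ - n² = n² / (n - 1)`, the right-hand side equals `n³ / (n - 1 + nⁿ ∏ xᵢ)`.
Let `H = n / ∑ 1/xᵢ` be the harmonic mean. HM-GM gives `Hⁿ ≤ ∏ xᵢ`, and Bernoulli's
inequality for `t = nH` gives `n t ≤ tⁿ + n - 1`, so `n² H ≤ n - 1 + nⁿ ∏ xᵢ`. Dividing `n³`
by both sides yields `n³ / (n - 1 + nⁿ ∏ xᵢ) ≤ n / H = ∑ 1/xᵢ`.
-/

open Finset

lemma pow_card_div_sum_inv_le_prod {ι : Type*} [Fintype ι] [Nonempty ι] {x : ι → ℝ}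
    (hx : ∀ i, 0 < x i) :
    ((Fintype.card ι : ℝ) / ∑ i, 1 / x i) ^ Fintype.card ι ≤ ∏ i, x i := by
  have hHM := Real.harm_mean_le_geom_mean univ univ_nonempty (fun _ ↦ 1) x
    (fun _ _ ↦ one_pos) (by simp [Fintype.card_pos]) (fun i _ ↦ hx i)
  simp only [sum_const, card_univ, nsmul_eq_mul, mul_one, Real.rpow_one] at hHM
  calc ((Fintype.card ι : ℝ) / ∑ i, 1 / x i) ^ Fintype.card ι
      ≤ ((∏ i, x i) ^ (Fintype.card ι : ℝ)⁻¹) ^ Fintype.card ι :=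
        pow_le_pow_left₀
          (div_nonneg (Nat.cast_nonneg _) (sum_nonneg fun i _ ↦ (one_div_pos.2 (hx i)).le)) hHM _
    _ = ∏ i, x i :=
        Real.rpow_inv_natCast_pow (prod_pos fun i _ ↦ hx i).le Fintype.card_ne_zero

theorem card_cube_div_le_sum_inv {ι : Type*} [Fintype ι] [Nonempty ι] {x : ι → ℝ}
    (hx : ∀ i, 0 < x i) :
    (Fintype.card ι : ℝ) ^ 3 /
        (Fintype.card ι - 1 + Fintype.card ι ^ Fintype.card ι * ∏ i, x i) ≤ ∑ i, 1 / x i := by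
  set n := Fintype.card ι
  set S := ∑ i, 1 / x i
  have hn : (0 : ℝ) < n := by exact_mod_cast Fintype.card_pos
  have hS : 0 < S := sum_pos (fun i _ ↦ by positivity [hx i]) univ_nonempty
  set H := (n : ℝ) / S
  have hH : 0 < H := div_pos hn hS
  have hHS : S * H = n := mul_div_cancel₀ _ hS.ne'
  have hBernoulli : 1 + n * (n * H - 1) ≤ (n * H) ^ n :=
    one_add_mul_sub_le_pow (by nlinarith) n
  have hHM : (n * H) ^ n ≤ (n : ℝ) ^ n * ∏ i, x i := by
    rw [mul_pow]
    exact mul_le_mul_of_nonneg_left (pow_card_div_sum_inv_le_prod hx) (by positivity)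
  have hden : (n : ℝ) ^ 2 * H ≤ n - 1 + n ^ n * ∏ i, x i := by nlinarith
  rw [div_le_iff₀ (lt_of_lt_of_le (by positivity) hden)]
  calc (n : ℝ) ^ 3 = S * (n ^ 2 * H) := by rw [mul_left_comm, hHS]; ring
    _ ≤ S * (n - 1 + n ^ n * ∏ i, x i) := mul_le_mul_of_nonneg_left hden hS.le

lemma cube_div_sub_one_div_one_add_eq {n : ℕ} (hn : 2 ≤ n) (P : ℝ) :
    ((n : ℝ) ^ 3 / ((n : ℝ) - 1)) /
        (1 + (n : ℝ) ^ (n - 2) * ((n : ℝ) ^ 3 / ((n : ℝ) - 1) - (n : ℝ) ^ 2) * P)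
      = (n : ℝ) ^ 3 / (n - 1 + n ^ n * P) := by
  have hn1 : (n : ℝ) - 1 ≠ 0 := by
    have : (2 : ℝ) ≤ n := by exact_mod_cast hn
    linarith
  obtain ⟨k, rfl⟩ := Nat.exists_eq_add_of_le' hn
  rw [Nat.add_sub_cancel]
  field_simp
  ring

theorem stmt_17_general (n : ℕ) (hn : 3 ≤ n) (x : Fin n → ℝ) (hx : ∀ i, 0 < x i) :
    (∑ i, 1 / x i) ≥
      ((n : ℝ) ^ 3 / ((n : ℝ) - 1)) /
        (1 + (n : ℝ) ^ (n - 2) * ((n : ℝ) ^ 3 / ((n : ℝ) - 1) - (n : ℝ) ^ 2) * ∏ i, x i) := by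
  have : Nonempty (Fin n) := ⟨⟨0, by omega⟩⟩
  rw [ge_iff_le, cube_div_sub_one_div_one_add_eq (by omega)]
  simpa using card_cube_div_le_sum_inv hx

theorem stmt_17 (n : ℕ) (hn : 3 ≤ n) (x : Fin n → ℝ) (hx : ∀ i, 0 < x i)
    (hsum : ∑ i, x i = 1) :
    (∑ i, 1 / x i) ≥
      ((n : ℝ) ^ 3 / ((n : ℝ) - 1)) /
        (1 + (n : ℝ) ^ (n - 2) * ((n : ℝ) ^ 3 / ((n : ℝ) - 1) - (n : ℝ) ^ 2) * ∏ i, x i) :=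
  stmt_17_general n hn x hx
end

section
/- For every natural n ≥ 3 and every real λ > n^3/(n-2), there exist positive reals x1, …, xn with Σ x_i = 1 such that Σ 1/x_i < λ / (1 + n^{n-2}(λ - n^2)·Π x_i); i.e. the best constant λ_n in this inequality satisfies λ_n ≤ n^3/(n-2). -/
open Filter Topology Set

/-!
Along the curve `x = (t, …, t, 1 - (n - 1) t)` consider
`f t = (∑ 1 / xᵢ) * (1 + c ∏ xᵢ)` with `c = n ^ (n - 2) * (λ - n ^ 2)`. At the centre `t = 1 / n`
both `∑ 1 / xᵢ` and `∏ xᵢ` are stationary, `f (1 / n) = λ`, and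
`f'' (1 / n) = (n - 1) n² (n³ - (n - 2) λ)`, which is negative exactly when `λ > n³ / (n - 2)`.
Hence `f t < λ` for `t` slightly larger than `1 / n`, which is the required counterexample.
-/

theorem eventually_nhdsGT_lt_of_hasDerivAt_of_deriv_neg {f f' : ℝ → ℝ} {x₀ f'' : ℝ}
    (hf : ∀ᶠ x in 𝓝 x₀, HasDerivAt f (f' x) x) (hf' : HasDerivAt f' f'' x₀)
    (h₀ : f' x₀ = 0) (hf'' : f'' < 0) : ∀ᶠ x in 𝓝[>] x₀, f x < f x₀ := by
  have hsign := eventually_nhdsWithin_sign_eq_of_deriv_neg (hf'.deriv ▸ hf'') h₀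
  have hright : ∀ᶠ x in 𝓝[>] x₀, HasDerivAt f (f' x) x ∧ f' x < 0 := by
    filter_upwards [nhdsWithin_le_nhds hf, nhdsWithin_le_nhds hsign, self_mem_nhdsWithin]
      with x hx hsx (hlt : x₀ < x)
    exact ⟨hx, by simpa [sub_neg.mpr hlt, sign_eq_neg_one_iff] using hsx⟩
  obtain ⟨ε, hε, hball⟩ := (nhdsGT_basis x₀).eventually_iff.mp hright
  filter_upwards [Ioo_mem_nhdsGT hε] with x hx
  have hanti : StrictAntiOn f (Icc x₀ x) := by
    refine strictAntiOn_of_hasDerivWithinAt_neg (f' := f') (convex_Icc _ _) ?_ ?_ ?_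
    · intro y hy
      rcases hy.1.eq_or_lt with rfl | hy₀
      · exact hf.self_of_nhds.continuousAt.continuousWithinAt
      · exact (hball ⟨hy₀, hy.2.trans_lt hx.2⟩).1.continuousAt.continuousWithinAt
    · rw [interior_Icc]
      exact fun y hy => (hball ⟨hy.1, hy.2.trans hx.2⟩).1.hasDerivWithinAt
    · rw [interior_Icc]
      exact fun y hy => (hball ⟨hy.1, hy.2.trans hx.2⟩).2
  exact hanti ⟨le_rfl, hx.1.le⟩ ⟨hx.1.le, le_rfl⟩ hx.1

-- The curve of the header, with `n = k + 2`.
noncomputable def testPoint (k : ℕ) (t : ℝ) : Fin (k + 2) → ℝ :=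
  Fin.snoc (fun _ => t) (1 - (k + 1) * t)

noncomputable def recipSum (a t : ℝ) : ℝ := a / t + 1 / (1 - a * t)

noncomputable def recipSum' (a t : ℝ) : ℝ := a * (1 / (1 - a * t) ^ 2 - 1 / t ^ 2)

def prodAlong (k : ℕ) (t : ℝ) : ℝ := t ^ (k + 1) * (1 - (k + 1) * t)

def prodAlong' (k : ℕ) (t : ℝ) : ℝ := (k + 1) * t ^ k * (1 - (k + 2) * t)

noncomputable def objective (k : ℕ) (c t : ℝ) : ℝ := recipSum (k + 1) t * (1 + c * prodAlong k t)

noncomputable def objective' (k : ℕ) (c t : ℝ) : ℝ :=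
  recipSum' (k + 1) t * (1 + c * prodAlong k t) + recipSum (k + 1) t * (c * prodAlong' k t)

section testPoint

variable (k : ℕ)

theorem testPoint_pos {t : ℝ} (ht : 0 < t) (ht' : (k + 1) * t < 1) (i : Fin (k + 2)) :
    0 < testPoint k t i := by
  induction i using Fin.lastCases with
  | last => simpa [testPoint] using ht'
  | cast i => simpa [testPoint] using ht

theorem sum_testPoint (t : ℝ) : ∑ i, testPoint k t i = 1 := by
  simp [testPoint, Fin.sum_univ_castSucc]

theorem sum_one_div_testPoint (t : ℝ) : ∑ i, 1 / testPoint k t i = recipSum (k + 1) t := by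
  simp [testPoint, Fin.sum_univ_castSucc, recipSum, div_eq_mul_inv]

theorem prod_testPoint (t : ℝ) : ∏ i, testPoint k t i = prodAlong k t := by
  simp [testPoint, Fin.prod_univ_castSucc, prodAlong]

end testPoint

section derivatives

variable {a t c : ℝ} {k : ℕ}

theorem hasDerivAt_recipSum (ht : t ≠ 0) (ht' : 1 - a * t ≠ 0) :
    HasDerivAt (recipSum a) (recipSum' a t) t := by
  refine (((hasDerivAt_const t a).div (hasDerivAt_id' t) ht).add
    ((hasDerivAt_const t 1).div (((hasDerivAt_id' t).const_mul a).const_sub 1) ht')).congr_deriv ?_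
  simp only [recipSum']; field_simp; ring

theorem hasDerivAt_recipSum' (ht : t ≠ 0) (ht' : 1 - a * t ≠ 0) :
    HasDerivAt (recipSum' a) (2 * a * (a / (1 - a * t) ^ 3 + 1 / t ^ 3)) t := by
  refine ((((hasDerivAt_const t 1).div ((((hasDerivAt_id' t).const_mul a).const_sub 1).pow 2)
    (pow_ne_zero 2 ht')).sub ((hasDerivAt_const t 1).div ((hasDerivAt_id' t).pow 2)
    (pow_ne_zero 2 ht))).const_mul a).congr_deriv ?_
  simp only [Pi.pow_apply]; field_simp; ring

theorem hasDerivAt_prodAlong : HasDerivAt (prodAlong k) (prodAlong' k t) t := by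
  refine ((hasDerivAt_pow (k + 1) t).mul
    (((hasDerivAt_id' t).const_mul ((k : ℝ) + 1)).const_sub 1)).congr_deriv ?_
  simp only [prodAlong']; push_cast; ring

theorem hasDerivAt_prodAlong' (ht : (k + 2) * t = 1) :
    HasDerivAt (prodAlong' k) (-((k + 1) * (k + 2) * t ^ k)) t := by
  refine (((hasDerivAt_pow k t).const_mul ((k : ℝ) + 1)).mul
    (((hasDerivAt_id' t).const_mul ((k : ℝ) + 2)).const_sub 1)).congr_deriv ?_
  rw [ht]; ring

theorem hasDerivAt_objective (ht : t ≠ 0) (ht' : 1 - (k + 1) * t ≠ 0) :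
    HasDerivAt (objective k c) (objective' k c t) t :=
  (hasDerivAt_recipSum ht ht').mul ((hasDerivAt_prodAlong.const_mul c).const_add 1)

end derivatives

section center

variable (k : ℕ) (c : ℝ)

theorem one_sub_mul_center : 1 - ((k : ℝ) + 1) * ((k : ℝ) + 2)⁻¹ = ((k : ℝ) + 2)⁻¹ := by
  field_simp; ring

theorem recipSum_center : recipSum (k + 1) ((k : ℝ) + 2)⁻¹ = ((k : ℝ) + 2) ^ 2 := by
  rw [recipSum, one_sub_mul_center]; field_simp; ring

theorem recipSum'_center : recipSum' (k + 1) ((k : ℝ) + 2)⁻¹ = 0 := by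
  rw [recipSum', one_sub_mul_center, sub_self, mul_zero]

theorem prodAlong_center : prodAlong k ((k : ℝ) + 2)⁻¹ = (((k : ℝ) + 2) ^ (k + 2))⁻¹ := by
  rw [prodAlong, one_sub_mul_center, inv_pow, ← mul_inv, ← pow_succ]

theorem prodAlong'_center : prodAlong' k ((k : ℝ) + 2)⁻¹ = 0 := by
  rw [prodAlong', mul_inv_cancel₀ (by positivity), sub_self, mul_zero]

theorem objective_center :
    objective k c ((k : ℝ) + 2)⁻¹ = ((k : ℝ) + 2) ^ 2 * (1 + c * (((k : ℝ) + 2) ^ (k + 2))⁻¹) := by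
  rw [objective, recipSum_center, prodAlong_center]

theorem objective'_center : objective' k c ((k : ℝ) + 2)⁻¹ = 0 := by
  rw [objective', recipSum'_center, prodAlong'_center]; ring

theorem hasDerivAt_objective'_center :
    HasDerivAt (objective' k c) (((k : ℝ) + 1) * ((k : ℝ) + 2) ^ 3 *
      (2 * ((k : ℝ) + 2) * (1 + c * (((k : ℝ) + 2) ^ (k + 2))⁻¹) - c * (((k : ℝ) + 2) ^ k)⁻¹))
      ((k : ℝ) + 2)⁻¹ := by
  have hx : ((k : ℝ) + 2)⁻¹ ≠ 0 := by positivity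
  have hx' : 1 - ((k : ℝ) + 1) * ((k : ℝ) + 2)⁻¹ ≠ 0 := by rw [one_sub_mul_center]; positivity
  refine (((hasDerivAt_recipSum' hx hx').mul
    ((hasDerivAt_prodAlong.const_mul c).const_add 1)).add
    ((hasDerivAt_recipSum hx hx').mul
      ((hasDerivAt_prodAlong' (mul_inv_cancel₀ (by positivity))).const_mul c))).congr_deriv ?_
  rw [recipSum'_center, recipSum_center, prodAlong_center, prodAlong'_center, one_sub_mul_center]
  simp only [inv_pow]
  field_simp
  ring

end center

section

variable {k : ℕ} {lam : ℝ}

theorem eventually_objective_lt (hk : 0 < k) (hlam : ((k : ℝ) + 2) ^ 3 / k < lam) :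
    ∀ᶠ t in 𝓝[>] ((k : ℝ) + 2)⁻¹,
      objective k (((k : ℝ) + 2) ^ k * (lam - ((k : ℝ) + 2) ^ 2)) t < lam := by
  set c := ((k : ℝ) + 2) ^ k * (lam - ((k : ℝ) + 2) ^ 2) with hc
  have hk' : (0 : ℝ) < k := Nat.cast_pos.mpr hk
  have hgap : 0 < ((k : ℝ) + 1) * ((k : ℝ) + 2) ^ 2 * (k * lam - ((k : ℝ) + 2) ^ 3) := by
    have := sub_pos.mpr (by rwa [div_lt_iff₀ hk', mul_comm] at hlam : ((k : ℝ) + 2) ^ 3 < k * lam)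
    positivity
  have h₁ : c * (((k : ℝ) + 2) ^ k)⁻¹ = lam - ((k : ℝ) + 2) ^ 2 := by
    rw [hc, mul_right_comm, mul_inv_cancel₀ (by positivity), one_mul]
  have h₂ : c * (((k : ℝ) + 2) ^ (k + 2))⁻¹ * ((k : ℝ) + 2) ^ 2 = lam - ((k : ℝ) + 2) ^ 2 := by
    rw [pow_add, mul_inv, ← mul_assoc, mul_assoc _ _ (_ ^ 2), inv_mul_cancel₀ (by positivity),
      mul_one, h₁]
  have hderiv : ∀ᶠ t in 𝓝 ((k : ℝ) + 2)⁻¹, HasDerivAt (objective k c) (objective' k c t) t := by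
    have hne : ∀ᶠ t in 𝓝 ((k : ℝ) + 2)⁻¹, t ≠ 0 := eventually_ne_nhds (by positivity)
    have hne' : ∀ᶠ t in 𝓝 ((k : ℝ) + 2)⁻¹, 1 - ((k : ℝ) + 1) * t ≠ 0 :=
      (by fun_prop : Continuous fun t : ℝ => 1 - ((k : ℝ) + 1) * t).continuousAt.eventually_ne
        (by rw [one_sub_mul_center]; positivity)
    filter_upwards [hne, hne'] with t ht ht'
    exact hasDerivAt_objective ht ht'
  -- With `h₁` and `h₂` the second derivative at the centre is `(k+1)(k+2)²((k+2)³ - kλ)`.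
  have hmax := eventually_nhdsGT_lt_of_hasDerivAt_of_deriv_neg hderiv
    (hasDerivAt_objective'_center k c) (objective'_center k c)
    (by linear_combination (2 * ((k : ℝ) + 1) * ((k : ℝ) + 2) ^ 2) * h₂ -
      (((k : ℝ) + 1) * ((k : ℝ) + 2) ^ 3) * h₁ + hgap)
  rwa [objective_center, (by linear_combination h₂ :
    ((k : ℝ) + 2) ^ 2 * (1 + c * (((k : ℝ) + 2) ^ (k + 2))⁻¹) = lam)] at hmax

theorem exists_recipSum_lt_div (hk : 0 < k) (hlam : ((k : ℝ) + 2) ^ 3 / k < lam) :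
    ∃ t, 0 < t ∧ ((k : ℝ) + 1) * t < 1 ∧ recipSum (k + 1) t <
      lam / (1 + ((k : ℝ) + 2) ^ k * (lam - ((k : ℝ) + 2) ^ 2) * prodAlong k t) := by
  have hcenter : ((k : ℝ) + 2)⁻¹ < ((k : ℝ) + 1)⁻¹ := inv_strictAnti₀ (by positivity) (by linarith)
  obtain ⟨t, hlt, ht₀, ht₁⟩ :=
    ((eventually_objective_lt hk hlam).and (Ioo_mem_nhdsGT hcenter)).exists
  have ht : 0 < t := (inv_pos.mpr (by positivity)).trans ht₀
  have ht' : ((k : ℝ) + 1) * t < 1 := calc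
    ((k : ℝ) + 1) * t < ((k : ℝ) + 1) * ((k : ℝ) + 1)⁻¹ := by gcongr
    _ = 1 := mul_inv_cancel₀ (by positivity)
  have hlam' : ((k : ℝ) + 2) ^ 2 < lam := calc
    ((k : ℝ) + 2) ^ 2 < ((k : ℝ) + 2) ^ 3 / k := by
      rw [lt_div_iff₀ (Nat.cast_pos.mpr hk)]; nlinarith
    _ < lam := hlam
  have hprod : 0 < prodAlong k t :=
    prod_testPoint k t ▸ Finset.prod_pos fun i _ => testPoint_pos k ht ht' i
  refine ⟨t, ht, ht', (lt_div_iff₀ ?_).mpr hlt⟩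
  have := sub_pos.mpr hlam'
  positivity

end

theorem stmt_18 (n : ℕ) (hn : 3 ≤ n) (lam : ℝ) (hlam : (n : ℝ) ^ 3 / ((n : ℝ) - 2) < lam) :
    ∃ x : Fin n → ℝ, (∀ i, 0 < x i) ∧ (∑ i, x i = 1) ∧
      (∑ i, 1 / x i) <
        lam / (1 + (n : ℝ) ^ (n - 2) * (lam - (n : ℝ) ^ 2) * ∏ i, x i) := by
  obtain ⟨k, rfl⟩ : ∃ k, n = k + 2 := ⟨n - 2, by omega⟩
  push_cast at hlam ⊢
  rw [add_sub_cancel_right] at hlam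
  obtain ⟨t, ht, ht', hlt⟩ := exists_recipSum_lt_div (by omega) hlam
  refine ⟨testPoint k t, testPoint_pos k ht ht', sum_testPoint k t, ?_⟩
  rwa [sum_one_div_testPoint, prod_testPoint]
end

section
/- For every natural n ≥ 3, p_n'(n/(n+1)) ≥ 0, where p_n(t) = ((n-1)-(n-2)t)·Σ_{k=1}^{n-1} k t^{k-1}; equivalently (1 + 1/n)^n ≥ 8/3 - 1/n + 1/(3n^2). -/
/-!
Write `S_m(t) = ∑_{k<m} (k+1) t^k`, so that `p_n(t) = ((n-1) - (n-2)t) S_{n-1}(t)`. The closed form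
`(1-t)^2 S_m(t) = 1 - (m+1) t^m + m t^(m+1)`, differentiated, also gives `S_m'`. At `t = n/(n+1)` we
have `1 - t = 1/(n+1)` and every power of `t` that occurs is a rational multiple of `c = t^n`, which
yields `p_n'(t) = 3n(n+1)^2 c ((1+1/n)^n - 8/3 + 1/n - 1/(3n^2))`. The second factor is nonnegative
because the first four terms of the binomial expansion of `(1+1/n)^n` sum to exactly
`8/3 - 1/n + 1/(3n^2)`.
-/

open Finset

theorem sum_range_pow_mul_choose_le_one_add_pow {R : Type*} [CommSemiring R] [PartialOrder R]
    [IsOrderedRing R] {x : R} (hx : 0 ≤ x) (n m : ℕ) :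
    ∑ k ∈ range m, x ^ k * n.choose k ≤ (1 + x) ^ n := by
  have hvanish : ∀ k ∈ range m, x ^ k * n.choose k ≠ 0 → k ∈ range (n + 1) := by
    intro k _ hk
    by_contra hkn
    rw [mem_range, not_lt] at hkn
    simp [Nat.choose_eq_zero_of_lt (Nat.lt_of_succ_le hkn)] at hk
  calc ∑ k ∈ range m, x ^ k * n.choose k
      = ∑ k ∈ range m with k ∈ range (n + 1), x ^ k * n.choose k := (sum_filter_of_ne hvanish).symm
    _ ≤ ∑ k ∈ range (n + 1), x ^ k * n.choose k :=
        sum_le_sum_of_subset_of_nonneg (fun k hk => (mem_filter.1 hk).2) fun _ _ _ => by positivity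
    _ = (1 + x) ^ n := by simp [add_comm 1 x, add_pow]

theorem Nat.cast_choose_three (K : Type*) [Field K] [CharZero K] (n : ℕ) :
    (n.choose 3 : K) = n * (n - 1) * (n - 2) / 6 := by
  induction n with
  | zero => simp
  | succ n ih =>
    rw [Nat.choose_succ_succ, Nat.cast_add, ih, Nat.cast_choose_two]
    push_cast
    ring

theorem one_add_inv_pow_ge {n : ℕ} (hn : n ≠ 0) :
    8 / 3 - 1 / (n : ℝ) + 1 / (3 * (n : ℝ) ^ 2) ≤ (1 + 1 / (n : ℝ)) ^ n := by
  calc 8 / 3 - 1 / (n : ℝ) + 1 / (3 * (n : ℝ) ^ 2)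
      = ∑ k ∈ range 4, (1 / (n : ℝ)) ^ k * n.choose k := by
        simp only [sum_range_succ, sum_range_zero, Nat.choose_zero_right, Nat.choose_one_right,
          Nat.cast_choose_two, Nat.cast_choose_three]
        field_simp
        ring
    _ ≤ (1 + 1 / (n : ℝ)) ^ n := sum_range_pow_mul_choose_le_one_add_pow (by positivity) n 4

noncomputable def weightedGeomSum (m : ℕ) (t : ℝ) : ℝ := ∑ k ∈ range m, ((k : ℝ) + 1) * t ^ k

theorem one_sub_sq_mul_weightedGeomSum (m : ℕ) (t : ℝ) :
    (1 - t) ^ 2 * weightedGeomSum m t = 1 - (m + 1) * t ^ m + m * t ^ (m + 1) := by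
  induction m with
  | zero => simp [weightedGeomSum]
  | succ m ih =>
    rw [weightedGeomSum, sum_range_succ, mul_add, ← weightedGeomSum, ih]
    push_cast
    ring

theorem differentiable_weightedGeomSum (m : ℕ) : Differentiable ℝ (weightedGeomSum m) := by
  unfold weightedGeomSum
  fun_prop

theorem one_sub_sq_mul_deriv_weightedGeomSum (m : ℕ) (t : ℝ) :
    (1 - t) ^ 2 * deriv (weightedGeomSum m) t - 2 * (1 - t) * weightedGeomSum m t
      = m * (m + 1) * (t ^ m - t ^ (m - 1)) := by
  have hlhs : HasDerivAt (fun t => (1 - t) ^ 2 * weightedGeomSum m t)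
      ((1 - t) ^ 2 * deriv (weightedGeomSum m) t - 2 * (1 - t) * weightedGeomSum m t) t :=
    ((((hasDerivAt_id t).const_sub 1).fun_pow 2).fun_mul
      (differentiable_weightedGeomSum m t).hasDerivAt).congr_deriv (by simp; ring)
  have hrhs : HasDerivAt (fun t : ℝ => 1 - (m + 1) * t ^ m + m * t ^ (m + 1))
      (m * (m + 1) * (t ^ m - t ^ (m - 1))) t :=
    ((((hasDerivAt_pow m t).const_mul ((m : ℝ) + 1)).const_sub 1).fun_add
      ((hasDerivAt_pow (m + 1) t).const_mul (m : ℝ))).congr_deriv (by push_cast; ring)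
  simp_rw [one_sub_sq_mul_weightedGeomSum] at hlhs
  exact hlhs.unique hrhs

section AtCriticalPoint

variable {n : ℕ}

theorem mul_pow_pred_div_succ {k : ℕ} (hk : k ≠ 0) :
    n * (n / (n + 1) : ℝ) ^ (k - 1) = (n + 1) * (n / (n + 1) : ℝ) ^ k := by
  rw [← pow_sub_one_mul hk]
  field_simp

theorem weightedGeomSum_pred_at (hn : n ≠ 0) :
    weightedGeomSum (n - 1) (n / (n + 1)) = (n + 1) ^ 2 * (1 - 2 * (n / (n + 1) : ℝ) ^ n) := by
  have h := one_sub_sq_mul_weightedGeomSum (n - 1) (n / (n + 1))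
  rw [Nat.sub_add_cancel (Nat.one_le_iff_ne_zero.2 hn), Nat.cast_pred (Nat.pos_of_ne_zero hn)] at h
  have hpow := mul_pow_pred_div_succ (n := n) hn
  -- keep the powers of `n / (n + 1)` out of reach of `field_simp`
  generalize (n / (n + 1) : ℝ) ^ n = c at *
  generalize (n / (n + 1) : ℝ) ^ (n - 1) = a at *
  field_simp at h
  linear_combination h - (n + 1) ^ 2 * hpow

theorem deriv_weightedGeomSum_pred_at (hn : 2 ≤ n) :
    n * deriv (weightedGeomSum (n - 1)) (n / (n + 1))
      = (n + 1) ^ 3 * (2 * n - (5 * n - 1) * (n / (n + 1) : ℝ) ^ n) := by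
  have h := one_sub_sq_mul_deriv_weightedGeomSum (n - 1) (n / (n + 1))
  rw [weightedGeomSum_pred_at (by omega), Nat.cast_pred (by omega)] at h
  have hpow := mul_pow_pred_div_succ (n := n) (k := n) (by omega)
  have hpow' := mul_pow_pred_div_succ (n := n) (k := n - 1) (by omega)
  generalize (n / (n + 1) : ℝ) ^ n = c at *
  generalize (n / (n + 1) : ℝ) ^ (n - 1) = a at *
  generalize (n / (n + 1) : ℝ) ^ (n - 1 - 1) = b at *
  field_simp at h
  linear_combination n * h - (n + 1) ^ 2 * (n - 1) * (hpow + n * hpow')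

theorem deriv_mul_weightedGeomSum_at (hn : 2 ≤ n) :
    deriv (fun t => ((n - 1 : ℝ) - (n - 2) * t) * weightedGeomSum (n - 1) t) (n / (n + 1))
      = 3 * n * (n + 1) ^ 2 * (n / (n + 1) : ℝ) ^ n *
        ((1 + 1 / (n : ℝ)) ^ n - (8 / 3 - 1 / (n : ℝ) + 1 / (3 * (n : ℝ) ^ 2))) := by
  have hderiv := (((hasDerivAt_id' (n / (n + 1) : ℝ)).const_mul ((n : ℝ) - 2)).const_sub
    ((n : ℝ) - 1)).fun_mul (differentiable_weightedGeomSum (n - 1) _).hasDerivAt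
  have hS := weightedGeomSum_pred_at (n := n) (by omega)
  have hD := deriv_weightedGeomSum_pred_at hn
  have hinv : (n / (n + 1) : ℝ) ^ n * (1 + 1 / (n : ℝ)) ^ n = 1 := by
    rw [← mul_pow]
    field_simp
    simp
  rw [hderiv.deriv, hS]
  generalize deriv (weightedGeomSum (n - 1)) (n / (n + 1)) = D at *
  generalize (n / (n + 1) : ℝ) ^ n = c at *
  generalize (1 + 1 / (n : ℝ)) ^ n = e at *
  field_simp
  linear_combination (2 * n - 1 : ℝ) * hD - 3 * n ^ 2 * (n + 1) ^ 3 * hinv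

end AtCriticalPoint

theorem stmt_19 (n : ℕ) (hn : 3 ≤ n)
    (p : ℝ → ℝ)
    (hp : p = fun t => (((n : ℝ) - 1) - ((n : ℝ) - 2) * t) *
      ∑ k ∈ Finset.range (n - 1), ((k : ℝ) + 1) * t ^ k) :
    0 ≤ deriv p ((n : ℝ) / ((n : ℝ) + 1)) ∧
      (1 + 1 / (n : ℝ)) ^ n ≥ 8 / 3 - 1 / (n : ℝ) + 1 / (3 * (n : ℝ) ^ 2) := by
  have hbound := one_add_inv_pow_ge (n := n) (by omega)
  refine ⟨?_, hbound⟩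
  subst hp
  change 0 ≤ deriv (fun t => _ * weightedGeomSum (n - 1) t) _
  rw [deriv_mul_weightedGeomSum_at (by omega)]
  exact mul_nonneg (by positivity) (sub_nonneg.2 hbound)
end
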